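/- Let n, k ≥ 1, ε ∈ [0,1), and E₀ = [[J_n, −J_n],[−J_n, J_n]]. Suppose M̂^{(0)},…,M̂^{(k)} is a feasible solution of the system {Tr_j(M^{(0)}) = 2 for 0 ≤ j < 2n; Tr_j(E₀ ⊙ M^{(t)}) = Tr_j(M^{(t+1)}) for 0 ≤ j < 2n, 0 ≤ t < k; M^{(k)}[0,0], M^{(k)}[n,n] ≥ 1−ε; all M^{(t)} PSD} in which each M̂^{(t)} = [[U^{(t)}, V^{(t)}],[V^{(t)}, U^{(t)}]]. Define M̌^{(t)} := [[V^{(t)}, U^{(t)}],[U^{(t)}, V^{(t)}]] and M^{(t)} := ½(M̂^{(t)} + (−1)^t M̌^{(t)}). Then M^{(0)},…,M^{(k)} is another feasible solution of the same system; in particular each M^{(t)} equals the Kronecker product (U^{(t)} + (−1)^t V^{(t)}) ⊗ ½[[1, (−1)^t],[(−1)^t, 1]] and is positive semidefinite. -/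

import Mathlib

noncomputable section
open Matrix Finset

/-- The generalized trace `tr_j(A)`: the sum of the entries `A[i,i']` with `i' - i = j`;
it is `0` for `|j| ≥ m`. -/
def gtr {m : ℕ} (A : Matrix (Fin m) (Fin m) ℝ) (j : ℤ) : ℝ :=
  ∑ i : Fin m, ∑ i' : Fin m, if ((i' : ℕ) : ℤ) - ((i : ℕ) : ℤ) = j then A i i' else 0

/-- The cyclic trace `Tr_j(A) = tr_j(A) + tr_{j-m}(A)` of an `m × m` matrix, `0 ≤ j < m`. -/
def ctr {m : ℕ} (A : Matrix (Fin m) (Fin m) ℝ) (j : ℕ) : ℝ :=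
  gtr A (j : ℤ) + gtr A ((j : ℤ) - (m : ℤ))

/-- The block matrix `E₀ = [[J_n, -J_n], [-J_n, J_n]]`. -/
def E0 (n : ℕ) : Matrix (Fin (2*n)) (Fin (2*n)) ℝ :=
  Matrix.of fun i j => if decide ((i : ℕ) < n) = decide ((j : ℕ) < n) then 1 else -1

/-- The `2n × 2n` block matrix `[[A, B], [B, A]]` built from `n × n` blocks `A` and `B`. -/
def blockOf (n : ℕ) (hn : 0 < n) (A B : Matrix (Fin n) (Fin n) ℝ) :
    Matrix (Fin (2*n)) (Fin (2*n)) ℝ :=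
  Matrix.of fun i j =>
    (if decide ((i : ℕ) < n) = decide ((j : ℕ) < n) then A else B)
      ⟨(i : ℕ) % n, Nat.mod_lt _ hn⟩ ⟨(j : ℕ) % n, Nat.mod_lt _ hn⟩

/-- The symmetrized Barnum–Saks–Szegedy system for ordered search (System B of
Proposition `bss_osp_simplifies`): `Tr_j(M^{(0)}) = 2`;
`Tr_j(E₀ ⊙ M^{(t)}) = Tr_j(M^{(t+1)})`; `M^{(k)}[0,0], M^{(k)}[n,n] ≥ 1-ε`; all `M^{(t)}`
PSD. -/
def SysB (n k : ℕ) (hn : 0 < n) (ε : ℝ) (M : ℕ → Matrix (Fin (2*n)) (Fin (2*n)) ℝ) : Prop :=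
  (∀ t ≤ k, (M t).PosSemidef) ∧
  (∀ j < 2*n, ctr (M 0) j = 2) ∧
  (∀ j < 2*n, ∀ t < k, ctr (Matrix.hadamard (E0 n) (M t)) j = ctr (M (t+1)) j) ∧
  (1 - ε ≤ M k ⟨0, by omega⟩ ⟨0, by omega⟩) ∧
  (1 - ε ≤ M k ⟨n, by omega⟩ ⟨n, by omega⟩)

-- ### basic ctr lemmas

theorem aux_gtr_add {m : ℕ} (A B : Matrix (Fin m) (Fin m) ℝ) (j : ℤ) :
    gtr (A + B) j = gtr A j + gtr B j := by
  unfold gtr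
  rw [← Finset.sum_add_distrib]
  refine Finset.sum_congr rfl fun i _ => ?_
  rw [← Finset.sum_add_distrib]
  refine Finset.sum_congr rfl fun i' _ => ?_
  split <;> simp [Matrix.add_apply]

theorem aux_gtr_smul {m : ℕ} (c : ℝ) (A : Matrix (Fin m) (Fin m) ℝ) (j : ℤ) :
    gtr (c • A) j = c * gtr A j := by
  unfold gtr
  rw [Finset.mul_sum]
  refine Finset.sum_congr rfl fun i _ => ?_
  rw [Finset.mul_sum]
  refine Finset.sum_congr rfl fun i' _ => ?_
  split <;> simp [Matrix.smul_apply]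

theorem aux_ctr_add {m : ℕ} (A B : Matrix (Fin m) (Fin m) ℝ) (j : ℕ) :
    ctr (A + B) j = ctr A j + ctr B j := by
  unfold ctr; rw [aux_gtr_add, aux_gtr_add]; ring

theorem aux_ctr_smul {m : ℕ} (c : ℝ) (A : Matrix (Fin m) (Fin m) ℝ) (j : ℕ) :
    ctr (c • A) j = c * ctr A j := by
  unfold ctr; rw [aux_gtr_smul, aux_gtr_smul]; ring

theorem aux_ctr_neg {m : ℕ} (A : Matrix (Fin m) (Fin m) ℝ) (j : ℕ) :
    ctr (-A) j = - ctr A j := by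
  rw [show -A = (-1 : ℝ) • A by simp, aux_ctr_smul]; ring

theorem aux_ctr_cyclic {m : ℕ} (A : Matrix (Fin m) (Fin m) ℝ) (j : ℕ) (hj : j < m) :
    ctr A j = ∑ i : Fin m, A i (i + ⟨j, hj⟩) := by
  unfold ctr gtr
  rw [← Finset.sum_add_distrib]
  refine Finset.sum_congr rfl fun i _ => ?_
  rw [← Finset.sum_add_distrib]
  set w : Fin m := i + ⟨j, hj⟩ with hwdef
  have hkey : (w : ℕ) = (i : ℕ) + j ∨
      ((w : ℕ) = (i : ℕ) + j - m ∧ m ≤ (i : ℕ) + j) := by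
    rw [hwdef, Fin.val_add]
    rcases Nat.lt_or_ge ((i : ℕ) + j) m with h | h
    · exact Or.inl (Nat.mod_eq_of_lt h)
    · right
      refine ⟨?_, h⟩
      rw [Nat.mod_eq_sub_mod h, Nat.mod_eq_of_lt (by omega)]
  clear_value w
  have hw' : (w : ℕ) < m := w.isLt
  have hi' : (i : ℕ) < m := i.isLt
  rw [Finset.sum_eq_single w]
  · rcases hkey with h | ⟨h, hm⟩
    · rw [if_pos (by push_cast; omega), if_neg (by push_cast; omega), add_zero]
    · rw [if_neg (by push_cast; omega), if_pos (by push_cast; omega), zero_add]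
  · intro b _ hb
    have hbv : (b : ℕ) ≠ (w : ℕ) := fun hh => hb (Fin.ext hh)
    have hb' : (b : ℕ) < m := b.isLt
    rw [if_neg, if_neg, add_zero]
    · intro hc; push_cast at hc
      rcases hkey with h | ⟨h, hm⟩ <;> omega
    · intro hc; push_cast at hc
      rcases hkey with h | ⟨h, hm⟩ <;> omega
  · intro h; exact absurd (Finset.mem_univ _) h

-- ### block lemmas

def finn (n : ℕ) (hn : 0 < n) : Fin (2*n) := ⟨n, by omega⟩

theorem aux_val_add_finn (n : ℕ) (hn : 0 < n) (i : Fin (2*n)) :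
    ((i + finn n hn : Fin (2*n)) : ℕ) = if (i : ℕ) < n then (i : ℕ) + n else (i : ℕ) - n := by
  have h2 : (i : ℕ) < 2*n := i.isLt
  rw [Fin.val_add]
  show ((i : ℕ) + n) % (2*n) = _
  split
  · exact Nat.mod_eq_of_lt (by omega)
  · rw [Nat.mod_eq_sub_mod (by omega), Nat.mod_eq_of_lt (by omega)]
    omega

theorem aux_mod_add_finn (n : ℕ) (hn : 0 < n) (i : Fin (2*n)) :
    ((i + finn n hn : Fin (2*n)) : ℕ) % n = (i : ℕ) % n := by
  have h2 : (i : ℕ) < 2*n := i.isLt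
  rw [aux_val_add_finn n hn i]
  split
  · exact Nat.add_mod_right _ _
  · next h =>
    conv_rhs => rw [Nat.mod_eq_sub_mod (by omega : n ≤ (i : ℕ))]

theorem aux_lt_add_finn (n : ℕ) (hn : 0 < n) (i : Fin (2*n)) :
    (((i + finn n hn : Fin (2*n)) : ℕ) < n) ↔ ¬((i : ℕ) < n) := by
  have h2 : (i : ℕ) < 2*n := i.isLt
  rw [aux_val_add_finn n hn i]
  split <;> omega

theorem aux_blockOf_apply_right (n : ℕ) (hn : 0 < n) (A B : Matrix (Fin n) (Fin n) ℝ)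
    (i j : Fin (2*n)) :
    blockOf n hn A B i (j + finn n hn) = blockOf n hn B A i j := by
  simp only [blockOf, Matrix.of_apply]
  rw [show (⟨((j + finn n hn : Fin (2*n)) : ℕ) % n, Nat.mod_lt _ hn⟩ : Fin n)
      = ⟨(j : ℕ) % n, Nat.mod_lt _ hn⟩ from Fin.ext (aux_mod_add_finn n hn j)]
  simp only [decide_eq_decide]
  by_cases hi : (i : ℕ) < n <;> by_cases hj : (j : ℕ) < n
  · rw [if_neg (by rw [aux_lt_add_finn]; tauto), if_pos (by tauto)]
  · rw [if_pos (by rw [aux_lt_add_finn]; tauto), if_neg (by tauto)]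
  · rw [if_pos (by rw [aux_lt_add_finn]; tauto), if_neg (by tauto)]
  · rw [if_neg (by rw [aux_lt_add_finn]; tauto), if_pos (by tauto)]

theorem aux_blockOf_apply_left (n : ℕ) (hn : 0 < n) (A B : Matrix (Fin n) (Fin n) ℝ)
    (i j : Fin (2*n)) :
    blockOf n hn A B (i + finn n hn) j = blockOf n hn B A i j := by
  simp only [blockOf, Matrix.of_apply]
  rw [show (⟨((i + finn n hn : Fin (2*n)) : ℕ) % n, Nat.mod_lt _ hn⟩ : Fin n)
      = ⟨(i : ℕ) % n, Nat.mod_lt _ hn⟩ from Fin.ext (aux_mod_add_finn n hn i)]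
  simp only [decide_eq_decide]
  by_cases hi : (i : ℕ) < n <;> by_cases hj : (j : ℕ) < n
  · rw [if_neg (by rw [aux_lt_add_finn]; tauto), if_pos (by tauto)]
  · rw [if_pos (by rw [aux_lt_add_finn]; tauto), if_neg (by tauto)]
  · rw [if_pos (by rw [aux_lt_add_finn]; tauto), if_neg (by tauto)]
  · rw [if_neg (by rw [aux_lt_add_finn]; tauto), if_pos (by tauto)]

theorem aux_blockOf_apply_both (n : ℕ) (hn : 0 < n) (A B : Matrix (Fin n) (Fin n) ℝ)
    (i j : Fin (2*n)) :
    blockOf n hn A B (i + finn n hn) (j + finn n hn) = blockOf n hn A B i j := by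
  rw [aux_blockOf_apply_left, aux_blockOf_apply_right]

theorem aux_blockOf_diag (n : ℕ) (hn : 0 < n) (A B : Matrix (Fin n) (Fin n) ℝ)
    (i : Fin (2*n)) :
    blockOf n hn A B i i = A ⟨(i : ℕ) % n, Nat.mod_lt _ hn⟩ ⟨(i : ℕ) % n, Nat.mod_lt _ hn⟩ := by
  simp [blockOf]

theorem aux_blockOf_off (n : ℕ) (hn : 0 < n) (A B : Matrix (Fin n) (Fin n) ℝ)
    (i : Fin (2*n)) :
    blockOf n hn A B i (i + finn n hn)
      = B ⟨(i : ℕ) % n, Nat.mod_lt _ hn⟩ ⟨(i : ℕ) % n, Nat.mod_lt _ hn⟩ := by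
  rw [aux_blockOf_apply_right, aux_blockOf_diag]

-- ### ctr of block matrices

theorem aux_ctr_blockOf_zero (n : ℕ) (hn : 0 < n) (A B : Matrix (Fin n) (Fin n) ℝ) :
    ctr (blockOf n hn A B) 0
      = ∑ i : Fin (2*n), A ⟨(i : ℕ) % n, Nat.mod_lt _ hn⟩ ⟨(i : ℕ) % n, Nat.mod_lt _ hn⟩ := by
  rw [aux_ctr_cyclic _ 0 (by omega)]
  refine Finset.sum_congr rfl fun i _ => ?_
  have h0 : i + (⟨0, by omega⟩ : Fin (2*n)) = i := by
    apply Fin.ext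
    rw [Fin.val_add]
    simp [Nat.mod_eq_of_lt i.isLt]
  rw [h0, aux_blockOf_diag]

theorem aux_ctr_blockOf_n (n : ℕ) (hn : 0 < n) (A B : Matrix (Fin n) (Fin n) ℝ) :
    ctr (blockOf n hn A B) n
      = ∑ i : Fin (2*n), B ⟨(i : ℕ) % n, Nat.mod_lt _ hn⟩ ⟨(i : ℕ) % n, Nat.mod_lt _ hn⟩ := by
  rw [aux_ctr_cyclic _ n (by omega)]
  exact Finset.sum_congr rfl fun i _ => aux_blockOf_off n hn A B i

theorem aux_ctr_swap (n : ℕ) (hn : 0 < n) (A B : Matrix (Fin n) (Fin n) ℝ) (j : ℕ)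
    (hj : j < 2*n) :
    ctr (blockOf n hn B A) j = ctr (blockOf n hn A B) ((j + n) % (2*n)) := by
  haveI : NeZero (2*n) := ⟨by omega⟩
  have hj' : (j + n) % (2*n) < 2*n := Nat.mod_lt _ (by omega)
  rw [aux_ctr_cyclic _ j hj, aux_ctr_cyclic _ _ hj']
  refine Finset.sum_congr rfl fun i _ => ?_
  have he : (⟨(j + n) % (2*n), hj'⟩ : Fin (2*n)) = ⟨j, hj⟩ + finn n hn := by
    apply Fin.ext
    rw [Fin.val_add]
    rfl
  rw [he, ← add_assoc, aux_blockOf_apply_right]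

-- ### entrywise lemmas

theorem aux_E0_hadamard (n : ℕ) (hn : 0 < n) (A B : Matrix (Fin n) (Fin n) ℝ) :
    Matrix.hadamard (E0 n) (blockOf n hn A B) = blockOf n hn A (-B) := by
  ext i j
  simp only [Matrix.hadamard, Matrix.of_apply, E0, blockOf]
  split <;> simp

theorem aux_blockOf_neg (n : ℕ) (hn : 0 < n) (A B : Matrix (Fin n) (Fin n) ℝ) :
    blockOf n hn (-A) B = -(blockOf n hn A (-B)) := by
  ext i j
  simp only [blockOf, Matrix.of_apply, Matrix.neg_apply]
  split <;> simp

theorem aux_hadamard_comb (n : ℕ) (s : ℝ) (X Y : Matrix (Fin (2*n)) (Fin (2*n)) ℝ) :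
    Matrix.hadamard (E0 n) ((1/2 : ℝ) • (X + s • Y))
      = (1/2 : ℝ) • (Matrix.hadamard (E0 n) X + s • Matrix.hadamard (E0 n) Y) := by
  ext i j
  simp only [Matrix.hadamard, Matrix.of_apply, Matrix.smul_apply, Matrix.add_apply,
    smul_eq_mul]
  ring

theorem aux_comb_eq (n : ℕ) (hn : 0 < n) (UU VV : Matrix (Fin n) (Fin n) ℝ) (s : ℝ)
    (hs : s * s = 1) :
    (1/2 : ℝ) • (blockOf n hn UU VV + s • blockOf n hn VV UU) =
      blockOf n hn ((1/2 : ℝ) • (UU + s • VV)) ((s / 2) • (UU + s • VV)) := by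
  rcases mul_self_eq_one_iff.mp hs with rfl | rfl <;>
  · ext i j
    simp only [blockOf, Matrix.of_apply, Matrix.smul_apply, Matrix.add_apply, smul_eq_mul]
    split <;> simp only [Matrix.smul_apply, Matrix.add_apply, smul_eq_mul] <;> ring

-- ### positive semidefiniteness

theorem aux_psd_comb (n : ℕ) (hn : 0 < n) (UU VV : Matrix (Fin n) (Fin n) ℝ)
    (hM : (blockOf n hn UU VV).PosSemidef) (s : ℝ) (hs : s * s = 1) :
    ((1/2 : ℝ) • (blockOf n hn UU VV + s • blockOf n hn VV UU)).PosSemidef := by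
  classical
  set C : Matrix (Fin (2*n)) (Fin (2*n)) ℝ :=
    Matrix.of (fun i b => (1/2 : ℝ) * (if b = i then 1 else 0)
      + (s/2) * (if b = i + finn n hn then 1 else 0)) with hC
  have hCH : ∀ a j : Fin (2*n), Cᴴ a j = C j a := by
    intro a j; simp [Matrix.conjTranspose_apply]
  have inner : ∀ i a, (C * blockOf n hn UU VV) i a
      = (1/2) * blockOf n hn UU VV i a + (s/2) * blockOf n hn UU VV (i + finn n hn) a := by
    intro i a
    rw [Matrix.mul_apply]
    simp only [hC, Matrix.of_apply, add_mul, mul_assoc, ite_mul, one_mul, zero_mul,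
      Finset.sum_add_distrib, ← Finset.mul_sum, Finset.sum_ite_eq', Finset.mem_univ,
      if_true]
  have key : (1/2 : ℝ) • (blockOf n hn UU VV + s • blockOf n hn VV UU)
      = C * blockOf n hn UU VV * Cᴴ := by
    ext i j
    rw [Matrix.mul_apply]
    simp only [hCH, inner]
    simp only [hC, Matrix.of_apply, mul_add, add_mul, mul_ite, mul_one, mul_zero,
      Finset.sum_add_distrib, Finset.sum_ite_eq', Finset.mem_univ, if_true]
    rw [aux_blockOf_apply_left, aux_blockOf_apply_right, aux_blockOf_apply_both]
    simp only [Matrix.smul_apply, Matrix.add_apply, smul_eq_mul]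
    rcases mul_self_eq_one_iff.mp hs with rfl | rfl <;> ring
  rw [key]
  exact hM.mul_mul_conjTranspose_same C

theorem aux_psd_diag_nonneg {m : ℕ} {A : Matrix (Fin m) (Fin m) ℝ} (h : A.PosSemidef)
    (i : Fin m) : 0 ≤ A i i := by
  simpa using h.2 (Finsupp.single i 1)

theorem aux_neg_one_pow_sq (t : ℕ) : ((-1 : ℝ) ^ t) * ((-1 : ℝ) ^ t) = 1 := by
  rw [← pow_add]
  exact Even.neg_one_pow ⟨t, rfl⟩

theorem aux_ctr_trace {m : ℕ} (hm : 0 < m) (A : Matrix (Fin m) (Fin m) ℝ) :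
    ctr A 0 = ∑ i : Fin m, A i i := by
  rw [aux_ctr_cyclic _ 0 (by omega)]
  refine Finset.sum_congr rfl fun i _ => ?_
  have h0 : i + (⟨0, by omega⟩ : Fin m) = i := by
    apply Fin.ext
    rw [Fin.val_add]
    simp [Nat.mod_eq_of_lt i.isLt]
  rw [h0]

/-- Given a feasible solution `M̂^{(t)} = [[U^{(t)}, V^{(t)}], [V^{(t)}, U^{(t)}]]` of the
symmetrized BSS system for ordered search, the matrices
`M^{(t)} = ½(M̂^{(t)} + (-1)^t M̌^{(t)})`, where `M̌^{(t)} = [[V^{(t)}, U^{(t)}], [U^{(t)},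
V^{(t)}]]`, form another feasible solution; in particular, each `M^{(t)}` equals the
Kronecker product `(U^{(t)} + (-1)^t V^{(t)}) ⊗ ½[[1, (-1)^t], [(-1)^t, 1]]` (written as a
block matrix) and is positive semidefinite. -/
theorem stmt_14 (n k : ℕ) (hn : 0 < n) (hk : 0 < k) (ε : ℝ) (hε0 : 0 ≤ ε) (hε1 : ε < 1)
    (U V : ℕ → Matrix (Fin n) (Fin n) ℝ)
    (hfeas : SysB n k hn ε (fun t => blockOf n hn (U t) (V t))) :
    SysB n k hn ε (fun t =>
      (1/2 : ℝ) • (blockOf n hn (U t) (V t) + ((-1 : ℝ) ^ t) • blockOf n hn (V t) (U t))) ∧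
    (∀ t ≤ k,
      (1/2 : ℝ) • (blockOf n hn (U t) (V t) + ((-1 : ℝ) ^ t) • blockOf n hn (V t) (U t)) =
        blockOf n hn ((1/2 : ℝ) • (U t + ((-1 : ℝ) ^ t) • V t))
          (((-1 : ℝ) ^ t / 2) • (U t + ((-1 : ℝ) ^ t) • V t))) ∧
    (∀ t ≤ k,
      ((1/2 : ℝ) • (blockOf n hn (U t) (V t) +
        ((-1 : ℝ) ^ t) • blockOf n hn (V t) (U t))).PosSemidef) := by
  obtain ⟨hPSD, h0, hrec, hA, hB⟩ := hfeas
  simp only at hPSD h0 hrec hA hB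
  -- trace facts along the chain
  have htr : ∀ t, t ≤ k → ctr (blockOf n hn (U t) (V t)) 0 = 2 ∧
      ctr (blockOf n hn (U t) (V t)) n = 2 * (-1 : ℝ) ^ t := by
    intro t
    induction t with
    | zero =>
      intro _
      refine ⟨h0 0 (by omega), ?_⟩
      rw [h0 n (by omega)]
      norm_num
    | succ t ih =>
      intro ht
      obtain ⟨ih0, ihn⟩ := ih (by omega)
      have hr0 := (hrec 0 (by omega) t (by omega)).symm
      have hrn := (hrec n (by omega) t (by omega)).symm
      rw [aux_E0_hadamard] at hr0 hrn
      constructor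
      · rw [hr0, aux_ctr_blockOf_zero]
        rw [aux_ctr_blockOf_zero] at ih0
        exact ih0
      · rw [hrn, aux_ctr_blockOf_n]
        rw [aux_ctr_blockOf_n] at ihn
        have : ∑ i : Fin (2*n),
            (-(V t)) ⟨(i : ℕ) % n, Nat.mod_lt _ hn⟩ ⟨(i : ℕ) % n, Nat.mod_lt _ hn⟩
            = -∑ i : Fin (2*n),
            (V t) ⟨(i : ℕ) % n, Nat.mod_lt _ hn⟩ ⟨(i : ℕ) % n, Nat.mod_lt _ hn⟩ := by
          rw [← Finset.sum_neg_distrib]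
          exact Finset.sum_congr rfl fun i _ => by simp
        rw [this, ihn, pow_succ]
        ring
  -- the corner entries
  have hcorner : ∀ i : Fin (2*n),
      ((1/2 : ℝ) • (blockOf n hn (U k) (V k) + ((-1 : ℝ) ^ k) • blockOf n hn (V k) (U k))) i i
        = blockOf n hn (U k) (V k) i i := by
    set s : ℝ := (-1 : ℝ) ^ k with hsdef
    have hs : s * s = 1 := aux_neg_one_pow_sq k
    have hNpsd := aux_psd_comb n hn (U k) (V k) (hPSD k le_rfl) (-s)
      (by rw [neg_mul_neg]; exact hs)
    set N := (1/2 : ℝ) • (blockOf n hn (U k) (V k) + (-s) • blockOf n hn (V k) (U k)) with hN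
    have hsum : ∑ i : Fin (2*n), N i i = 0 := by
      have e1 : ∀ i : Fin (2*n), N i i =
          (1/2 : ℝ) * blockOf n hn (U k) (V k) i i
            + (-s/2) * blockOf n hn (V k) (U k) i i := by
        intro i
        simp only [hN, Matrix.smul_apply, Matrix.add_apply, smul_eq_mul, neg_mul]
        ring
      have t1 : ∑ i : Fin (2*n), blockOf n hn (U k) (V k) i i = 2 := by
        rw [← aux_ctr_trace (by omega) (blockOf n hn (U k) (V k))]
        exact (htr k le_rfl).1
      have t2 : ∑ i : Fin (2*n), blockOf n hn (V k) (U k) i i = 2 * s := by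
        rw [← aux_ctr_trace (by omega) (blockOf n hn (V k) (U k)), aux_ctr_blockOf_zero,
          ← aux_ctr_blockOf_n n hn (U k) (V k), (htr k le_rfl).2, hsdef]
      rw [Finset.sum_congr rfl fun i _ => e1 i, Finset.sum_add_distrib, ← Finset.mul_sum,
        ← Finset.mul_sum, t1, t2]
      linear_combination -hs
    have hzero : ∀ i : Fin (2*n), N i i = 0 := by
      intro i
      have hnn : ∀ i ∈ Finset.univ, (0:ℝ) ≤ N i i :=
        fun i _ => aux_psd_diag_nonneg hNpsd i
      exact (Finset.sum_eq_zero_iff_of_nonneg hnn).mp hsum i (Finset.mem_univ i)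
    intro i
    have h1 := hzero i
    simp only [hN, Matrix.smul_apply, Matrix.add_apply, smul_eq_mul, neg_mul] at h1 ⊢
    linarith
  have hE : ∀ t j, j < 2*n →
      ctr (Matrix.hadamard (E0 n)
        ((1/2 : ℝ) • (blockOf n hn (U t) (V t) + ((-1 : ℝ) ^ t) • blockOf n hn (V t) (U t)))) j
      = (1/2 : ℝ) * (ctr (blockOf n hn (U t) (-(V t))) j
          + ((-1 : ℝ) ^ t) * ctr (blockOf n hn (V t) (-(U t))) j) := by
    intro t j hj
    rw [aux_hadamard_comb, aux_E0_hadamard, aux_E0_hadamard, aux_ctr_smul, aux_ctr_add,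
      aux_ctr_smul]
  have hPnew : ∀ t, t ≤ k →
      ((1/2 : ℝ) • (blockOf n hn (U t) (V t)
        + ((-1 : ℝ) ^ t) • blockOf n hn (V t) (U t))).PosSemidef :=
    fun t ht => aux_psd_comb n hn (U t) (V t) (hPSD t ht) _ (aux_neg_one_pow_sq t)
  refine ⟨⟨fun t ht => hPnew t ht, ?_, ?_, ?_, ?_⟩,
    fun t _ => aux_comb_eq n hn (U t) (V t) _ (aux_neg_one_pow_sq t), fun t ht => hPnew t ht⟩
  · -- first constraint
    intro j hj
    simp only
    rw [aux_ctr_smul, aux_ctr_add, aux_ctr_smul, pow_zero,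
      aux_ctr_swap n hn (U 0) (V 0) j hj, h0 j hj, h0 _ (Nat.mod_lt _ (by omega))]
    norm_num
  · -- recurrence constraint
    intro j hj t ht
    simp only
    have hj' : (j + n) % (2*n) < 2*n := Nat.mod_lt _ (by omega)
    have e1 := hrec j hj t ht
    have e2 := hrec _ hj' t ht
    rw [aux_E0_hadamard] at e1 e2
    rw [hE t j hj]
    rw [aux_ctr_smul, aux_ctr_add, aux_ctr_smul,
      aux_ctr_swap n hn (U (t+1)) (V (t+1)) j hj]
    rw [aux_ctr_swap n hn (-(U t)) (V t) j hj, aux_blockOf_neg, aux_ctr_neg]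
    rw [e1, e2, pow_succ]
    ring
  · -- corner (0,0)
    simp only
    rw [hcorner ⟨0, by omega⟩]
    exact hA
  · -- corner (n,n)
    simp only
    rw [hcorner ⟨n, by omega⟩]
    exact hB
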